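/- Let h(t) be a one-parameter family of bilinear forms on an n-dimensional real inner product space (V,g), differentiable in t. Then for every 1 ≤ k ≤ n, (d/dt) s_k(h(t)) = ⟨t_{k−1}(h(t)), h′(t)⟩; in particular, for k = n one has Jacobi's formula (d/dt) det(h(t)) = ⟨t_{n−1}(h(t)), h′(t)⟩. -/

import Mathlib

/-!
Expanding `det (X - h)` shows that `s_k(h)` is the sum of the principal `k × k` minors of `h`;
Jacobi's formula `(det N)' = tr (adj N · N')` differentiates each of them, and the cofactors of
a principal submatrix `h_T` are signed `(k - 1)`-minors of `h`.

On the double-form side, `h^q` evaluates to `q!` times the `q × q` minors of `h` (Laplace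
expansion) and `g^p` to `p!` times the identity, so the `(i, j)` entry of
`t_{k-1}(h) = *(g^{n-k} h^{k-1}) / ((k-1)! (n-k)!)` is the sum, over the `k`-sets `T ∋ i, j`,
of the same cofactors of `h_T`: the signs contributed by the Hodge star cancel in pairs.
-/

noncomputable section

open Finset

/-- Double forms over an `n`-dimensional real inner product space, described by their
coefficients in a fixed orthonormal basis: a `(p,q)`-double form corresponds to a function
supported on pairs of subsets of cardinalities `p` and `q`. -/
abbrev DForm (n : ℕ) := Finset (Fin n) → Finset (Fin n) → ℝ

namespace DForm

variable {n : ℕ}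

/-- Sign of the shuffle placing the elements of `A` (in increasing order) before
those of `B` (in increasing order). -/
def shuffleSign (A B : Finset (Fin n)) : ℝ :=
  (-1 : ℝ) ^ (∑ x ∈ B, (A.filter fun a => x < a).card)

/-- The exterior product of double forms. -/
def wedge (ω₁ ω₂ : DForm n) : DForm n := fun I J =>
  ∑ A ∈ I.powerset, ∑ B ∈ J.powerset,
    shuffleSign A (I \ A) * shuffleSign B (J \ B) * ω₁ A B * ω₂ (I \ A) (J \ B)

/-- Exterior powers `ω^k` of a double form. -/
def dpow (ω : DForm n) : ℕ → DForm n
  | 0 => fun I J => if I = ∅ ∧ J = ∅ then 1 else 0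
  | k + 1 => wedge ω (dpow ω k)

/-- The double Hodge star operator. -/
def hstar (ω : DForm n) : DForm n := fun I J =>
  shuffleSign Iᶜ I * shuffleSign Jᶜ J * ω Iᶜ Jᶜ

/-- The contraction `c` of double forms. -/
def contr (ω : DForm n) : DForm n := fun I J =>
  ∑ j : Fin n,
    if j ∈ I ∨ j ∈ J then 0
    else shuffleSign {j} I * shuffleSign {j} J * ω (insert j I) (insert j J)

/-- Iterated contraction `c^k`. -/
def citer (ω : DForm n) : ℕ → DForm n
  | 0 => ω
  | k + 1 => contr (citer ω k)

/-- The inner product of double forms. -/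
def dinner (ω₁ ω₂ : DForm n) : ℝ :=
  ∑ I : Finset (Fin n), ∑ J : Finset (Fin n), ω₁ I J * ω₂ I J

/-- The transpose `ω^t` of a double form. -/
def transp (ω : DForm n) : DForm n := fun I J => ω J I

/-- The composition (Greub) product `ω₁ ∘ ω₂` of double forms. -/
def comp (ω₁ ω₂ : DForm n) : DForm n := fun I J =>
  ∑ K : Finset (Fin n), ω₂ I K * ω₁ K J

/-- The scalar value of a `(0,0)`-double form. -/
def toScalar (ω : DForm n) : ℝ := ω ∅ ∅

/-- The metric, as a `(1,1)`-double form. -/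
def gMetric (n : ℕ) : DForm n := fun I J => if I = J ∧ I.card = 1 then 1 else 0

/-- Iterated composition power `ω^{∘r}` of a `(1,1)`-double form, with `ω^{∘0} = g`. -/
def cpow (ω : DForm n) : ℕ → DForm n
  | 0 => gMetric n
  | r + 1 => comp ω (cpow ω r)

/-- The `(1,1)`-double form associated to a bilinear form, given by its matrix in the
orthonormal basis. -/
def ofMatrix (h : Matrix (Fin n) (Fin n) ℝ) : DForm n := fun I J =>
  ∑ i : Fin n, ∑ j : Fin n, if I = {i} ∧ J = {j} then h i j else 0

/-- `ω` is a `(p,q)`-double form. -/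
def IsOfDeg (ω : DForm n) (p q : ℕ) : Prop :=
  ∀ I J : Finset (Fin n), ω I J ≠ 0 → I.card = p ∧ J.card = q

/-- `ω` is a symmetric double form. -/
def IsSym (ω : DForm n) : Prop := ∀ I J, ω I J = ω J I

/-- The sign relating `e_{v 0} ∧ ⋯ ∧ e_{v (p-1)}` to the corresponding increasing
basis `p`-vector (and `0` if the indices are not pairwise distinct). -/
def tupleSign {p : ℕ} (v : Fin p → Fin n) : ℝ :=
  if Function.Injective v then (((Equiv.Perm.sign (Tuple.sort v)) : ℤ) : ℝ) else 0

/-- Evaluation of a double form on wedges of basis vectors indexed by arbitrary tuples. -/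
def evalT (ω : DForm n) {p q : ℕ} (v : Fin p → Fin n) (w : Fin q → Fin n) : ℝ :=
  tupleSign v * tupleSign w * ω (Finset.image v Finset.univ) (Finset.image w Finset.univ)

/-- The first Bianchi identity for a `(2,2)`-double form:
`R(x∧y,z∧t) + R(y∧z,x∧t) + R(z∧x,y∧t) = 0`. -/
def Bianchi2 (R : DForm n) : Prop :=
  ∀ x y z t : Fin n,
    evalT R ![x, y] ![z, t] + evalT R ![y, z] ![x, t] + evalT R ![z, x] ![y, t] = 0

/-- The first Bianchi identity for a `(p,p)`-double form. -/
def FirstBianchi (ω : DForm n) (p : ℕ) : Prop :=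
  ∀ (x : Fin (p + 1) → Fin n) (y : Fin (p - 1) → Fin n),
    ∑ j : Fin (p + 1),
      (-1 : ℝ) ^ (j : ℕ) * evalT ω (x ∘ Fin.succAbove j) (Fin.cons (x j) y) = 0

/-- The characteristic coefficient `s_k(h)` of a bilinear form `h`, defined through the
characteristic polynomial: `det(h - λ g) = ∑ (-1)^(n-i) s_i(h) λ^(n-i)`. -/
def sInv (h : Matrix (Fin n) (Fin n) ℝ) (k : ℕ) : ℝ :=
  (-1 : ℝ) ^ k * (Matrix.charpoly h).coeff (n - k)

/-- The `k`-th cofactor (Newton) transformation `t_k(h) = (1/(k!(n-1-k)!)) *(g^{n-1-k} h^k)`. -/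
def tInv (h : Matrix (Fin n) (Fin n) ℝ) (k : ℕ) : DForm n :=
  ((k.factorial * (n - 1 - k).factorial : ℕ) : ℝ)⁻¹ •
    hstar (wedge (dpow (gMetric n) (n - 1 - k)) (dpow (ofMatrix h) k))

/-- The `(r,q)`-cofactor `s_{(r,q)}(h) = (1/(q!(n-q-r)!)) *(g^{n-q-r} h^q)`. -/
def sCof (h : Matrix (Fin n) (Fin n) ℝ) (r q : ℕ) : DForm n :=
  ((q.factorial * (n - q - r).factorial : ℕ) : ℝ)⁻¹ •
    hstar (wedge (dpow (gMetric n) (n - q - r)) (dpow (ofMatrix h) q))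

end DForm

namespace Finset

variable {α : Type*} [LinearOrder α]

lemma card_erase_orderEmbOfFin {k : ℕ} (S : Finset α) (hS : S.card = k + 1) (r : Fin (k + 1)) :
    (S.erase (S.orderEmbOfFin hS r)).card = k := by
  simp [card_erase_of_mem (orderEmbOfFin_mem S hS r), hS]

lemma orderEmbOfFin_erase {k : ℕ} (S : Finset α) (hS : S.card = k + 1) (r : Fin (k + 1))
    (x : Fin k) :
    (S.erase (S.orderEmbOfFin hS r)).orderEmbOfFin (card_erase_orderEmbOfFin S hS r) x
      = S.orderEmbOfFin hS (r.succAbove x) := by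
  refine (congrFun (orderEmbOfFin_unique _ (fun y => mem_erase.2 ⟨?_, orderEmbOfFin_mem _ _ _⟩)
    ((S.orderEmbOfFin hS).strictMono.comp (Fin.strictMono_succAbove r))) x).symm
  exact fun hy => Fin.succAbove_ne r y ((S.orderEmbOfFin hS).injective hy)

lemma card_filter_lt_orderEmbOfFin {k : ℕ} (S : Finset α) (hS : S.card = k) (r : Fin k) :
    #{x ∈ S | x < S.orderEmbOfFin hS r} = r := by
  have : {x ∈ S | x < S.orderEmbOfFin hS r} = (Iio r).map (S.orderEmbOfFin hS).toEmbedding := by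
    ext x
    simp only [mem_filter, mem_map, mem_Iio, RelEmbedding.coe_toEmbedding]
    constructor
    · rintro ⟨hx, hlt⟩
      obtain ⟨j, rfl⟩ : x ∈ Set.range (S.orderEmbOfFin hS) := by rwa [range_orderEmbOfFin]
      exact ⟨j, (S.orderEmbOfFin hS).lt_iff_lt.1 hlt, rfl⟩
    · rintro ⟨j, hj, rfl⟩
      exact ⟨orderEmbOfFin_mem _ _ _, (S.orderEmbOfFin hS).lt_iff_lt.2 hj⟩
  rw [this, card_map, Fin.card_Iio]

lemma sum_orderEmbOfFin {M : Type*} [AddCommMonoid M] {k : ℕ} (S : Finset α) (hS : S.card = k)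
    (f : α → M) : ∑ x ∈ S, f x = ∑ r, f (S.orderEmbOfFin hS r) := by
  conv_lhs => rw [← S.map_orderEmbOfFin_univ hS, sum_map]
  rfl

lemma card_filter_gt_add_card_filter_lt_add_one {T : Finset α} {i : α} (hi : i ∈ T) :
    #{a ∈ T | i < a} + #{a ∈ T | a < i} + 1 = #T := by
  rw [← card_erase_add_one hi, ← card_union_of_disjoint
    (disjoint_filter.2 fun a _ h1 h2 => lt_asymm h1 h2), ← filter_or]
  congr 2
  ext a
  simp [lt_or_lt_iff_ne, ne_comm, and_comm]

lemma card_filter_compl_singleton_gt [Fintype α] (T : Finset α) (i : α) :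
    #{a ∈ ({i}ᶜ : Finset α) | i < a} = #{a ∈ T | i < a} + #{a ∈ Tᶜ | i < a} := by
  simp only [card_filter]
  rw [sum_add_sum_compl, ← add_zero (∑ a ∈ {i}ᶜ, _), ← sum_compl_add_sum {i}]
  simp

end Finset

namespace Matrix

section Minor

variable {α R : Type*} [LinearOrder α]

lemma submatrix_orderEmbOfFin_erase (h : Matrix α α R) {k : ℕ} {I J : Finset α}
    (hI : I.card = k + 1) (hJ : J.card = k + 1) (r c : Fin (k + 1)) :
    (h.submatrix (I.orderEmbOfFin hI) (J.orderEmbOfFin hJ)).submatrix r.succAbove c.succAbove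
      = h.submatrix
          ((I.erase (I.orderEmbOfFin hI r)).orderEmbOfFin (card_erase_orderEmbOfFin I hI r))
          ((J.erase (J.orderEmbOfFin hJ c)).orderEmbOfFin (card_erase_orderEmbOfFin J hJ c)) := by
  ext a b
  simp [orderEmbOfFin_erase]

variable [CommRing R]

/-- The minor of `h` with rows `I` and columns `J`, both listed increasingly; it is `0` unless
`#I = #J = k`. -/
def minorDet (h : Matrix α α R) (k : ℕ) (I J : Finset α) : R :=
  if hIJ : I.card = k ∧ J.card = k then
    (h.submatrix (I.orderEmbOfFin hIJ.1) (J.orderEmbOfFin hIJ.2)).det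
  else 0

lemma minorDet_of_card (h : Matrix α α R) {k : ℕ} {I J : Finset α} (hI : I.card = k)
    (hJ : J.card = k) :
    minorDet h k I J = (h.submatrix (I.orderEmbOfFin hI) (J.orderEmbOfFin hJ)).det :=
  dif_pos ⟨hI, hJ⟩

lemma minorDet_of_not_card (h : Matrix α α R) {k : ℕ} {I J : Finset α}
    (hIJ : ¬(I.card = k ∧ J.card = k)) : minorDet h k I J = 0 :=
  dif_neg hIJ

lemma minorDet_succ (h : Matrix α α R) {k : ℕ} {I J : Finset α} (hI : I.card = k + 1)
    (hJ : J.card = k + 1) (r : Fin (k + 1)) :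
    minorDet h (k + 1) I J = ∑ c : Fin (k + 1),
      (-1) ^ ((r : ℕ) + c) * h (I.orderEmbOfFin hI r) (J.orderEmbOfFin hJ c) *
        minorDet h k (I.erase (I.orderEmbOfFin hI r)) (J.erase (J.orderEmbOfFin hJ c)) := by
  rw [minorDet_of_card h hI hJ, det_succ_row _ r]
  refine sum_congr rfl fun c _ => ?_
  rw [submatrix_orderEmbOfFin_erase, minorDet_of_card, submatrix_apply]

lemma minorDet_one (k : ℕ) (I J : Finset α) :
    minorDet (1 : Matrix α α R) k I J = if I = J ∧ I.card = k then 1 else 0 := by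
  by_cases hc : I.card = k ∧ J.card = k
  · rw [minorDet_of_card _ hc.1 hc.2]
    by_cases hIJ : I = J
    · subst hIJ
      rw [if_pos ⟨rfl, hc.1⟩, submatrix_one _ (I.orderEmbOfFin hc.1).injective, det_one]
    · rw [if_neg fun hx => hIJ hx.1]
      obtain ⟨x, hxI, hxJ⟩ : ∃ x ∈ I, x ∉ J := by
        by_contra! hall
        exact hIJ (eq_of_subset_of_card_le hall (by rw [hc.1, hc.2]))
      obtain ⟨a, rfl⟩ : x ∈ Set.range (I.orderEmbOfFin hc.1) := by
        rwa [range_orderEmbOfFin]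
      refine det_eq_zero_of_row_eq_zero a fun b => ?_
      rw [submatrix_apply, one_apply_ne]
      exact fun hx => hxJ (hx ▸ orderEmbOfFin_mem J hc.2 b)
  · rw [minorDet_of_not_card _ hc, if_neg]
    rintro ⟨rfl, hk⟩
    exact hc ⟨hk, hk⟩

lemma adjugate_submatrix_orderEmbOfFin (h : Matrix α α R) {k : ℕ} {T : Finset α}
    (hT : T.card = k + 1) (a b : Fin (k + 1)) :
    adjugate (h.submatrix (T.orderEmbOfFin hT) (T.orderEmbOfFin hT)) b a
      = (-1) ^ ((a : ℕ) + b) *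
        minorDet h k (T.erase (T.orderEmbOfFin hT a)) (T.erase (T.orderEmbOfFin hT b)) := by
  rw [adjugate_fin_succ_eq_det_submatrix, submatrix_orderEmbOfFin_erase, minorDet_of_card]

lemma charpoly_coeff_eq_sum_minorDet [Fintype α] (h : Matrix α α R) {k : ℕ}
    (hk : k ≤ Fintype.card α) :
    h.charpoly.coeff (Fintype.card α - k)
      = (-1) ^ k * ∑ T ∈ univ.powersetCard k, minorDet h k T T := by
  rw [charpoly_coeff_eq_sum_minors h k hk]
  congr 1
  refine sum_congr rfl fun T hT => ?_
  have hTk := (mem_powersetCard.1 hT).2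
  rw [minorDet_of_card h hTk hTk, ← det_submatrix_equiv_self (T.orderIsoOfFin hTk).toEquiv,
    submatrix_submatrix]
  rfl

end Minor

section Jacobi

variable {m : Type*} [Fintype m] [DecidableEq m]

lemma trace_adjugate_mul {R : Type*} [CommRing R] (A B : Matrix m m R) :
    (A.adjugate * B).trace = ∑ a, (A.updateCol a fun r => B r a).det := by
  simp only [trace, diag_apply, mul_apply, ← cramer_apply, cramer_eq_adjugate_mulVec, mulVec,
    dotProduct]

lemma det_updateCol_eq_sum {R : Type*} [CommRing R] (A : Matrix m m R) (a : m) (v : m → R) :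
    (A.updateCol a v).det
      = ∑ σ : Equiv.Perm m, ((Equiv.Perm.sign σ : ℤ) : R) *
          ((∏ b ∈ univ.erase a, A (σ b) b) * v (σ a)) := by
  rw [det_apply']
  refine sum_congr rfl fun σ _ => ?_
  rw [← mul_prod_erase univ _ (mem_univ a), updateCol_self, mul_comm (v (σ a)),
    prod_congr rfl fun b hb => updateCol_ne (ne_of_mem_erase hb)]

theorem hasDerivAt_det {𝕜 : Type*} [NontriviallyNormedField 𝕜] {N : 𝕜 → Matrix m m 𝕜}
    {N' : Matrix m m 𝕜} {t : 𝕜} (hN : ∀ a b, HasDerivAt (fun s => N s a b) (N' a b) t) :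
    HasDerivAt (fun s => (N s).det) ((N t).adjugate * N').trace t := by
  simp only [trace_adjugate_mul, det_updateCol_eq_sum]
  rw [sum_comm]
  simp only [det_apply']
  refine HasDerivAt.fun_sum fun σ _ => ?_
  rw [← mul_sum]
  simpa only [smul_eq_mul] using
    (HasDerivAt.fun_finsetProd fun i _ => hN (σ i) i).const_mul ((Equiv.Perm.sign σ : ℤ) : 𝕜)

end Jacobi

end Matrix

namespace DForm

open Matrix

variable {n : ℕ}

lemma shuffleSign_singleton_left (i : Fin n) (B : Finset (Fin n)) :
    shuffleSign {i} B = (-1) ^ #{x ∈ B | x < i} := by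
  simp only [shuffleSign, card_filter, filter_singleton]
  congr 1
  exact sum_congr rfl fun x _ => by split_ifs <;> rfl

lemma shuffleSign_singleton_erase (i : Fin n) (B : Finset (Fin n)) :
    shuffleSign {i} (B.erase i) = (-1) ^ #{x ∈ B | x < i} := by
  rw [shuffleSign_singleton_left, filter_erase, erase_eq_of_notMem (by simp)]

lemma shuffleSign_singleton_erase_orderEmbOfFin {k : ℕ} (S : Finset (Fin n)) (hS : S.card = k)
    (r : Fin k) :
    shuffleSign {S.orderEmbOfFin hS r} (S.erase (S.orderEmbOfFin hS r)) = (-1) ^ (r : ℕ) := by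
  rw [shuffleSign_singleton_erase, card_filter_lt_orderEmbOfFin]

lemma shuffleSign_mul_self (A B : Finset (Fin n)) : shuffleSign A B * shuffleSign A B = 1 := by
  rw [shuffleSign, ← pow_add, ← two_mul, pow_mul]
  norm_num

/-- The bracketed factor depends on `T` only, so it cancels when the identities for the row index
`i` and the column index `j` are multiplied. -/
lemma shuffleSign_compl_singleton_mul {T : Finset (Fin n)} {i : Fin n} (hi : i ∈ T) :
    shuffleSign {i}ᶜ {i} * shuffleSign Tᶜ (T.erase i)
      = shuffleSign {i} (T.erase i) * (shuffleSign Tᶜ T * (-1) ^ (#T - 1)) := by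
  rw [shuffleSign_singleton_erase]
  simp only [shuffleSign, sum_singleton]
  rw [← add_sum_erase T _ hi]
  simp only [← pow_add]
  rw [neg_one_pow_eq_pow_mod_two]
  conv_rhs => rw [neg_one_pow_eq_pow_mod_two]
  have h1 := card_filter_compl_singleton_gt T i
  have h2 := card_filter_gt_add_card_filter_lt_add_one hi
  congr 1
  omega

lemma ofMatrix_singleton (m : Matrix (Fin n) (Fin n) ℝ) (i j : Fin n) :
    ofMatrix m {i} {j} = m i j := by
  simp [ofMatrix, ite_and]

lemma wedge_ofMatrix_apply (m : Matrix (Fin n) (Fin n) ℝ) (ω : DForm n) (I J : Finset (Fin n)) :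
    wedge (ofMatrix m) ω I J = ∑ i ∈ I, ∑ j ∈ J,
      shuffleSign {i} (I.erase i) * shuffleSign {j} (J.erase j) * m i j *
        ω (I.erase i) (J.erase j) := by
  simp only [wedge, ofMatrix, mul_sum, sum_mul, mul_ite, ite_mul, mul_zero, zero_mul, ite_and]
  simp_rw [sum_comm (s := J.powerset), sum_comm (s := I.powerset)]
  simp only [sum_ite_eq', mem_powerset, singleton_subset_iff, sum_ite_mem, univ_inter,
    sum_ite_irrel, sum_const_zero, sdiff_singleton_eq_erase]

lemma dpow_ofMatrix (h : Matrix (Fin n) (Fin n) ℝ) (k : ℕ) (I J : Finset (Fin n)) :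
    dpow (ofMatrix h) k I J = k.factorial * minorDet h k I J := by
  induction k generalizing I J with
  | zero =>
    by_cases hIJ : I = ∅ ∧ J = ∅
    · obtain ⟨rfl, rfl⟩ := hIJ
      simp [dpow, minorDet]
    · rw [minorDet_of_not_card _ (by simpa using hIJ)]
      simp [dpow, hIJ]
  | succ k ih =>
    rw [dpow, wedge_ofMatrix_apply]
    simp only [ih]
    by_cases hc : I.card = k + 1 ∧ J.card = k + 1
    · obtain ⟨hI, hJ⟩ := hc
      have hrow : ∀ r : Fin (k + 1), ∑ j ∈ J,
          shuffleSign {I.orderEmbOfFin hI r} (I.erase (I.orderEmbOfFin hI r)) *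
            shuffleSign {j} (J.erase j) * h (I.orderEmbOfFin hI r) j *
            (k.factorial * minorDet h k (I.erase (I.orderEmbOfFin hI r)) (J.erase j))
          = k.factorial * minorDet h (k + 1) I J := by
        intro r
        rw [minorDet_succ h hI hJ r, mul_sum, sum_orderEmbOfFin J hJ]
        refine sum_congr rfl fun c _ => ?_
        rw [shuffleSign_singleton_erase_orderEmbOfFin, shuffleSign_singleton_erase_orderEmbOfFin,
          pow_add]
        ring
      rw [sum_orderEmbOfFin I hI, sum_congr rfl fun r _ => hrow r, sum_const, card_univ,
        Fintype.card_fin, nsmul_eq_mul, Nat.factorial_succ]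
      push_cast
      ring
    · rw [minorDet_of_not_card h hc, mul_zero]
      refine sum_eq_zero fun i hi => sum_eq_zero fun j hj => ?_
      rw [minorDet_of_not_card h, mul_zero, mul_zero]
      rw [card_erase_of_mem hi, card_erase_of_mem hj]
      have := card_pos.2 ⟨i, hi⟩
      have := card_pos.2 ⟨j, hj⟩
      omega

lemma gMetric_eq_ofMatrix_one : gMetric n = ofMatrix (1 : Matrix (Fin n) (Fin n) ℝ) := by
  funext I J
  by_cases hIJ : I = J ∧ I.card = 1
  · obtain ⟨rfl, hI⟩ := hIJ
    obtain ⟨i, rfl⟩ := card_eq_one.1 hI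
    simp [gMetric, ofMatrix_singleton]
  · simp only [gMetric, if_neg hIJ, ofMatrix, one_apply]
    refine (sum_eq_zero fun i _ => sum_eq_zero fun j _ => ?_).symm
    split_ifs with hij hi <;> try rfl
    obtain ⟨rfl, rfl⟩ := hij
    exact absurd ⟨by rw [hi], card_singleton i⟩ hIJ

lemma dpow_gMetric (k : ℕ) (I J : Finset (Fin n)) :
    dpow (gMetric n) k I J = k.factorial * if I = J ∧ I.card = k then 1 else 0 := by
  rw [gMetric_eq_ofMatrix_one, dpow_ofMatrix, minorDet_one]

lemma wedge_dpow_gMetric_dpow_ofMatrix_apply (h : Matrix (Fin n) (Fin n) ℝ) (p q : ℕ)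
    (I J : Finset (Fin n)) :
    wedge (dpow (gMetric n) p) (dpow (ofMatrix h) q) I J
      = p.factorial * q.factorial * ∑ A ∈ I.powerset with A ⊆ J ∧ #A = p,
          shuffleSign A (I \ A) * shuffleSign A (J \ A) * minorDet h q (I \ A) (J \ A) := by
  simp only [wedge, dpow_gMetric, dpow_ofMatrix, mul_sum, sum_filter, ite_and, mul_ite, ite_mul,
    mul_zero, zero_mul, mul_one]
  refine sum_congr rfl fun A _ => ?_
  rw [sum_ite_eq]
  simp only [mem_powerset]
  split_ifs <;> ring

/-- The `(i, j)` cofactor of the principal submatrix of `h` on `T`, with its sign written as in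
the double-form calculus. -/
def cofactor (h : Matrix (Fin n) (Fin n) ℝ) (k : ℕ) (T : Finset (Fin n)) (i j : Fin n) : ℝ :=
  shuffleSign {i} (T.erase i) * shuffleSign {j} (T.erase j) * minorDet h k (T.erase i) (T.erase j)

lemma tInv_singleton (h : Matrix (Fin n) (Fin n) ℝ) {k : ℕ} (hk : k < n) (i j : Fin n) :
    tInv h k {i} {j} = ∑ T ∈ univ.powersetCard (k + 1) with i ∈ T ∧ j ∈ T, cofactor h k T i j := by
  have hsum : shuffleSign {i}ᶜ {i} * shuffleSign {j}ᶜ {j} *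
      ∑ A ∈ ({i}ᶜ : Finset (Fin n)).powerset with A ⊆ {j}ᶜ ∧ #A = n - 1 - k,
        shuffleSign A ({i}ᶜ \ A) * shuffleSign A ({j}ᶜ \ A) *
          minorDet h k ({i}ᶜ \ A) ({j}ᶜ \ A)
      = ∑ T ∈ univ.powersetCard (k + 1) with i ∈ T ∧ j ∈ T, cofactor h k T i j := by
    rw [mul_sum]
    refine sum_nbij' compl compl ?_ ?_ (fun _ _ => compl_compl _) (fun _ _ => compl_compl _) ?_
    · intro A hA
      simp only [mem_filter, mem_powerset, subset_compl_singleton, mem_powersetCard, subset_univ,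
        true_and, mem_compl, card_compl, Fintype.card_fin] at hA ⊢
      exact ⟨by omega, hA.1, hA.2.1⟩
    · intro T hT
      simp only [mem_filter, mem_powerset, subset_compl_singleton, mem_powersetCard, subset_univ,
        true_and, mem_compl, card_compl, Fintype.card_fin, not_not] at hT ⊢
      exact ⟨hT.2.1, hT.2.2, by omega⟩
    · intro A hA
      obtain ⟨T, rfl⟩ : ∃ T, A = Tᶜ := ⟨Aᶜ, (compl_compl A).symm⟩
      simp only [mem_filter, mem_powerset, subset_compl_singleton, mem_compl, not_not] at hA
      rw [cofactor, compl_compl, compl_sdiff_compl, compl_sdiff_compl, sdiff_singleton_eq_erase,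
        sdiff_singleton_eq_erase]
      have hρ :
          (shuffleSign Tᶜ T * (-1) ^ (#T - 1)) * (shuffleSign Tᶜ T * (-1) ^ (#T - 1)) = 1 := by
        rw [mul_mul_mul_comm, shuffleSign_mul_self, ← pow_add, ← two_mul, pow_mul]
        norm_num
      linear_combination
        (shuffleSign {j}ᶜ {j} * shuffleSign Tᶜ (T.erase j) * minorDet h k (T.erase i) (T.erase j))
          * shuffleSign_compl_singleton_mul hA.1
        + (shuffleSign {i} (T.erase i) * (shuffleSign Tᶜ T * (-1) ^ (#T - 1))
          * minorDet h k (T.erase i) (T.erase j)) * shuffleSign_compl_singleton_mul hA.2.1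
        + (shuffleSign {i} (T.erase i) * shuffleSign {j} (T.erase j)
          * minorDet h k (T.erase i) (T.erase j)) * hρ
  rw [tInv, Pi.smul_apply, Pi.smul_apply, smul_eq_mul, hstar,
    wedge_dpow_gMetric_dpow_ofMatrix_apply, ← hsum]
  push_cast
  field_simp

lemma dinner_ofMatrix (ω : DForm n) (m : Matrix (Fin n) (Fin n) ℝ) :
    dinner ω (ofMatrix m) = ∑ i, ∑ j, ω {i} {j} * m i j := by
  simp only [dinner, ofMatrix, mul_sum, mul_ite, mul_zero, ite_and]
  simp_rw [sum_comm (s := (univ : Finset (Finset (Fin n)))) (t := (univ : Finset (Fin n)))]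
  simp [sum_ite_eq']

lemma dinner_tInv_ofMatrix (h m : Matrix (Fin n) (Fin n) ℝ) {k : ℕ} (hk : k < n) :
    dinner (tInv h k) (ofMatrix m)
      = ∑ T ∈ univ.powersetCard (k + 1), ∑ i ∈ T, ∑ j ∈ T, cofactor h k T i j * m i j := by
  simp only [dinner_ofMatrix, tInv_singleton h hk, sum_mul, sum_filter, ite_mul, zero_mul]
  conv_lhs => enter [2, i]; rw [sum_comm]
  rw [sum_comm]
  refine sum_congr rfl fun T _ => ?_
  simp only [ite_and, sum_ite_irrel, sum_const_zero, sum_ite_mem, univ_inter]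

lemma sInv_eq_sum_minorDet (h : Matrix (Fin n) (Fin n) ℝ) {k : ℕ} (hk : k ≤ n) :
    sInv h k = ∑ T ∈ univ.powersetCard k, minorDet h k T T := by
  have := charpoly_coeff_eq_sum_minorDet h (k := k) (by simpa using hk)
  rw [Fintype.card_fin] at this
  rw [sInv, this, ← mul_assoc, ← pow_add, ← two_mul, pow_mul]
  simp

lemma sInv_card (h : Matrix (Fin n) (Fin n) ℝ) : sInv h n = h.det := by
  rw [sInv, det_eq_sign_charpoly_coeff, Fintype.card_fin, Nat.sub_self]

lemma hasDerivAt_sInv_succ {h : ℝ → Matrix (Fin n) (Fin n) ℝ} {h' : Matrix (Fin n) (Fin n) ℝ}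
    {t : ℝ} (hd : ∀ i j, HasDerivAt (fun s => h s i j) (h' i j) t) {k : ℕ} (hk : k < n) :
    HasDerivAt (fun s => sInv (h s) (k + 1))
      (∑ T ∈ univ.powersetCard (k + 1), ∑ i ∈ T, ∑ j ∈ T, cofactor (h t) k T i j * h' i j) t := by
  simp only [sInv_eq_sum_minorDet _ (show k + 1 ≤ n from hk)]
  refine HasDerivAt.fun_sum fun T hT => ?_
  have hT := (mem_powersetCard.1 hT).2
  simp only [minorDet_of_card _ hT hT]
  refine (hasDerivAt_det (N := fun s => (h s).submatrix (T.orderEmbOfFin hT) (T.orderEmbOfFin hT))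
    (N' := h'.submatrix (T.orderEmbOfFin hT) (T.orderEmbOfFin hT))
    fun a b => hd _ _).congr_deriv ?_
  simp only [trace, diag_apply, mul_apply, adjugate_submatrix_orderEmbOfFin]
  simp only [cofactor, submatrix_apply, sum_orderEmbOfFin T hT,
    shuffleSign_singleton_erase_orderEmbOfFin, pow_add]
  exact sum_comm

end DForm

open DForm in
/-- Jacobi's formula: `(d/dt) s_k(h(t)) = ⟨t_{k-1}(h(t)), h'(t)⟩`; in particular for `k = n`,
`(d/dt) det(h(t)) = ⟨t_{n-1}(h(t)), h'(t)⟩`. -/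
theorem statement10 (n : ℕ) (h h' : ℝ → Matrix (Fin n) (Fin n) ℝ)
    (hd : ∀ (i j : Fin n) (t : ℝ), HasDerivAt (fun s => h s i j) (h' t i j) t) :
    (∀ (k : ℕ) (t : ℝ), 1 ≤ k → k ≤ n →
      HasDerivAt (fun s => sInv (h s) k)
        (dinner (tInv (h t) (k - 1)) (ofMatrix (h' t))) t) ∧
    (∀ t : ℝ, 1 ≤ n →
      HasDerivAt (fun s => (h s).det)
        (dinner (tInv (h t) (n - 1)) (ofMatrix (h' t))) t) := by
  have hsInv : ∀ (k : ℕ) (t : ℝ), 1 ≤ k → k ≤ n →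
      HasDerivAt (fun s => sInv (h s) k) (dinner (tInv (h t) (k - 1)) (ofMatrix (h' t))) t := by
    rintro k t hk1 hkn
    obtain ⟨k, rfl⟩ := Nat.exists_eq_add_of_le' hk1
    rw [Nat.add_sub_cancel, dinner_tInv_ofMatrix _ _ hkn]
    exact hasDerivAt_sInv_succ (fun i j => hd i j t) hkn
  refine ⟨hsInv, fun t hn => ?_⟩
  simpa only [sInv_card] using hsInv n t hn le_rfl
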